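/- arXiv:2212.07979 — 2 statements merged into one kernel-verified Lean document; each statement's English description precedes it below -/
import Mathlib

section
/- Let R₁ and R₂ be unambiguous regexes over Σ whose languages overlap (so R₁·R₂ is ambiguous). If there do NOT exist words b, d, e, g over Σ with c := d ++ e nonempty such that b ++ c^i ++ d ∈ L(R₁) for every i ∈ ℕ and e ++ c^j ++ g ∈ L(R₂) for every j ∈ ℕ, then the concatenation R₁·R₂ is finitely ambiguous. (Paper's Theorem 2(b).) -/
/-! Shared definitions: words, word power, parse trees of regular expressions,
(un)ambiguity, finite/infinite ambiguity, and the Brabrand–Thomsen overlap. -/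

universe u

variable {α : Type u}

/-- `wpow w n` is the `n`-fold concatenation `w^n` of the word `w` with itself. -/
def wpow (w : List α) : ℕ → List α
  | 0 => []
  | n + 1 => w ++ wpow w n

/-- Parse trees of a regular expression for a word, defined inductively:
the regex `ε` has a unique parse tree for the empty word; the character regex
for `a` has a unique parse tree for the word `[a]`; a parse tree of `R₁ + R₂`
(alternation) for `w` is a parse tree of `R₁` for `w` or a parse tree of `R₂`
for `w` (the two sides distinct); a parse tree of `R₁ * R₂` (concatenation)
for `w` is a decomposition `w = u ++ v` with parse trees of `R₁` for `u` and
of `R₂` for `v`; a parse tree of `R*` for `w` is a finite list of words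
(possibly empty entries) concatenating to `w` with a parse tree of `R` for each. -/
inductive ParseTree : RegularExpression α → List α → Type u where
  | eps : ParseTree RegularExpression.epsilon []
  | char (a : α) : ParseTree (RegularExpression.char a) [a]
  | plusLeft {R₁ R₂ : RegularExpression α} {w : List α} :
      ParseTree R₁ w → ParseTree (R₁ + R₂) w
  | plusRight {R₁ R₂ : RegularExpression α} {w : List α} :
      ParseTree R₂ w → ParseTree (R₁ + R₂) w
  | comp {R₁ R₂ : RegularExpression α} {u v : List α} :
      ParseTree R₁ u → ParseTree R₂ v → ParseTree (R₁ * R₂) (u ++ v)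
  | starNil {R : RegularExpression α} : ParseTree R.star []
  | starCons {R : RegularExpression α} {u v : List α} :
      ParseTree R u → ParseTree R.star v → ParseTree R.star (u ++ v)

/-- A regex is unambiguous if every word has at most one parse tree of it. -/
def Unambiguous (R : RegularExpression α) : Prop :=
  ∀ (w : List α) (t₁ t₂ : ParseTree R w), t₁ = t₂

/-- A regex is ambiguous if some word has two distinct parse trees of it. -/
def Ambiguous (R : RegularExpression α) : Prop :=
  ∃ (w : List α) (t₁ t₂ : ParseTree R w), t₁ ≠ t₂

/-- The word `w` has at least `k` distinct parse trees of `R`. -/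
def HasAtLeastTrees (R : RegularExpression α) (w : List α) (k : ℕ) : Prop :=
  ∃ l : List (ParseTree R w), l.Nodup ∧ k ≤ l.length

/-- Every word has at most `k` parse trees of `R`. -/
def BoundedBy (R : RegularExpression α) (k : ℕ) : Prop :=
  ∀ (w : List α) (l : List (ParseTree R w)), l.Nodup → l.length ≤ k

/-- `R` is finitely ambiguous: ambiguous, with a uniform bound on the number
of parse trees of any word. -/
def FinitelyAmbiguous (R : RegularExpression α) : Prop :=
  Ambiguous R ∧ ∃ k : ℕ, BoundedBy R k

/-- `R` is infinitely ambiguous: for every `k` some word has more than `k`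
parse trees of `R`. -/
def InfinitelyAmbiguous (R : RegularExpression α) : Prop :=
  ∀ k : ℕ, ∃ w : List α, HasAtLeastTrees R w (k + 1)

/-- Languages `L₁` and `L₂` overlap (nonemptiness of the Brabrand–Thomsen
overlap operator): there are words `x`, `y` and a nonempty word `a` with
`x ∈ L₁`, `x ++ a ∈ L₁`, `a ++ y ∈ L₂`, and `y ∈ L₂`. -/
def Overlaps (L₁ L₂ : Language α) : Prop :=
  ∃ x y a : List α, a ≠ [] ∧ x ∈ L₁ ∧ x ++ a ∈ L₁ ∧ a ++ y ∈ L₂ ∧ y ∈ L₂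

/-!
By unambiguity of `R₁` and `R₂`, a parse tree of `R₁ * R₂` for `w` is determined by its splitting
`w = u ++ v` with `u ∈ L₁ = L(R₁)`, `v ∈ L₂ = L(R₂)`. Map the splitting to the pair of the left
quotient `u⁻¹L₁` and the right quotient `L₂v⁻¹`, the latter encoded as the left quotient of
`L₂.reverse` by `v.reverse`. A regex language has finitely many left quotients, hence is regular,
and so is its reversal; thus the pairs range over a finite set. Two splittings
`u ++ (c ++ v) = (u ++ c) ++ v` with `c ≠ []` and the same pair would pump to `u ++ c^i ∈ L₁` and
`c^j ++ v ∈ L₂` for all `i`, `j`, the excluded pattern. So the map is injective, which bounds the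
number of parse trees; an overlap gives two distinct parse trees.
-/

open Computability

theorem wpow_append_self (c : List α) : ∀ n, wpow c n ++ c = c ++ wpow c n
  | 0 => by simp [wpow]
  | n + 1 => by rw [wpow, List.append_assoc, wpow_append_self c n]

theorem reverse_wpow (c : List α) : ∀ n, (wpow c n).reverse = wpow c.reverse n
  | 0 => rfl
  | n + 1 => by
    rw [wpow, List.reverse_append, reverse_wpow c n, wpow_append_self]
    rfl

namespace Language

variable {L M : Language α}

theorem mem_sSup_image {ι : Type*} {f : ι → Language α} {s : Set ι} {y : List α} :
    y ∈ sSup (f '' s) ↔ ∃ i ∈ s, y ∈ f i :=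
  ⟨fun ⟨_, ⟨i, hi, rfl⟩, hy⟩ => ⟨i, hi, hy⟩, fun ⟨i, hi, hy⟩ => ⟨_, ⟨i, hi, rfl⟩, hy⟩⟩

theorem leftQuotient_add (x : List α) :
    (L + M).leftQuotient x = L.leftQuotient x + M.leftQuotient x :=
  rfl

theorem leftQuotient_mul (x : List α) :
    (L * M).leftQuotient x =
      L.leftQuotient x * M + sSup (M.leftQuotient '' {v | ∃ u ∈ L, u ++ v = x}) := by
  ext y
  simp only [mem_leftQuotient, mem_add, mem_mul, mem_sSup_image, Set.mem_ofPred_eq]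
  constructor
  · rintro ⟨a, ha, b, hb, hab⟩
    rcases List.append_eq_append_iff.1 hab.symm with ⟨t, rfl, rfl⟩ | ⟨c, rfl, rfl⟩
    · exact Or.inl ⟨t, ha, b, hb, rfl⟩
    · exact Or.inr ⟨c, ⟨a, ha, rfl⟩, hb⟩
  · rintro (⟨t, ht, b, hb, rfl⟩ | ⟨c, ⟨a, ha, rfl⟩, hc⟩)
    · exact ⟨x ++ t, ht, b, hb, List.append_assoc _ _ _⟩
    · exact ⟨a, ha, c ++ y, hc, (List.append_assoc _ _ _).symm⟩

theorem leftQuotient_kstar {x : List α} (hx : x ≠ []) :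
    (L∗).leftQuotient x = sSup (L.leftQuotient '' {v | ∃ u ∈ L∗, u ++ v = x}) * L∗ := by
  ext y
  simp only [mem_leftQuotient, mem_mul, mem_sSup_image, Set.mem_ofPred_eq]
  constructor
  · -- Peel factors off the star decomposition of `x ++ y` up to the one straddling the end of `x`.
    rintro ⟨S, hS, hSL⟩
    induction S generalizing x y with
    | nil => exact absurd (List.append_eq_nil_iff.1 hS).1 hx
    | cons w S ih =>
      have hSL' : ∀ z ∈ S, z ∈ L := fun z hz => hSL z (List.mem_cons_of_mem _ hz)
      rw [List.flatten_cons] at hS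
      rcases List.append_eq_append_iff.1 hS with ⟨t, rfl, rfl⟩ | ⟨c, rfl, hc⟩
      · exact ⟨t, ⟨x, ⟨[], nil_mem_kstar L, rfl⟩, hSL _ List.mem_cons_self⟩, S.flatten,
          ⟨S, rfl, hSL'⟩, rfl⟩
      · rcases eq_or_ne c [] with rfl | hc0
        · refine ⟨[], ⟨w, ⟨[], nil_mem_kstar L, by simp⟩, ?_⟩, y, ⟨S, hc.symm, hSL'⟩, rfl⟩
          simpa using hSL _ List.mem_cons_self
        · obtain ⟨y₁, ⟨v, ⟨u, hu, rfl⟩, hv⟩, y₂, hy₂, rfl⟩ := ih hc0 _ hc.symm hSL'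
          have hwu : w ++ u ∈ L∗ :=
            mul_kstar_le_kstar (a := L) (append_mem_mul (hSL _ List.mem_cons_self) hu)
          exact ⟨y₁, ⟨v, ⟨w ++ u, hwu, List.append_assoc _ _ _⟩, hv⟩, y₂, hy₂, rfl⟩
  · rintro ⟨y₁, ⟨v, ⟨u, hu, rfl⟩, hv⟩, y₂, hy₂, rfl⟩
    have huv : u ++ (v ++ y₁) ∈ L∗ := kstar_mul_le_kstar (a := L) (append_mem_mul hu hv)
    have := append_mem_mul huv hy₂
    rw [kstar_mul_kstar] at this
    simpa only [List.append_assoc] using this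

theorem finite_range_leftQuotient_of_finite (hL : Set.Finite (α := List α) L) :
    (Set.range L.leftQuotient).Finite :=
  (hL.biUnion fun z _ => z.tails.finite_toSet).finite_subsets.subset <| by
    rintro _ ⟨x, rfl⟩ y hy
    exact Set.mem_biUnion hy ((List.mem_tails _ _).2 (List.suffix_append x y))

theorem finite_range_leftQuotient_add (hL : (Set.range L.leftQuotient).Finite)
    (hM : (Set.range M.leftQuotient).Finite) : (Set.range (L + M).leftQuotient).Finite :=
  (hL.image2 (· + ·) hM).subset <| by
    rintro _ ⟨x, rfl⟩
    exact ⟨_, ⟨x, rfl⟩, _, ⟨x, rfl⟩, (leftQuotient_add x).symm⟩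

theorem finite_range_leftQuotient_mul (hL : (Set.range L.leftQuotient).Finite)
    (hM : (Set.range M.leftQuotient).Finite) : (Set.range (L * M).leftQuotient).Finite :=
  ((hL.prod hM.finite_subsets).image fun p => p.1 * M + sSup p.2).subset <| by
    rintro _ ⟨x, rfl⟩
    exact ⟨(_, _), ⟨⟨x, rfl⟩, Set.image_subset_range _ _⟩, (leftQuotient_mul x).symm⟩

theorem finite_range_leftQuotient_kstar (hL : (Set.range L.leftQuotient).Finite) :
    (Set.range (L∗).leftQuotient).Finite :=
  ((hL.finite_subsets.image fun S => sSup S * L∗).insert (L∗)).subset <| by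
    rintro _ ⟨x, rfl⟩
    rcases eq_or_ne x [] with rfl | hx
    · exact Set.mem_insert _ _
    · exact Set.mem_insert_of_mem _ ⟨_, Set.image_subset_range _ _, (leftQuotient_kstar hx).symm⟩

theorem leftQuotient_append_wpow {u c : List α}
    (h : L.leftQuotient (u ++ c) = L.leftQuotient u) :
    ∀ n, L.leftQuotient (u ++ wpow c n) = L.leftQuotient u
  | 0 => by simp [wpow]
  | n + 1 => by
    rw [wpow, ← List.append_assoc, leftQuotient_append, h, ← leftQuotient_append,
      leftQuotient_append_wpow h n]

theorem append_wpow_mem {u c : List α} (hu : u ∈ L)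
    (h : L.leftQuotient (u ++ c) = L.leftQuotient u) (n : ℕ) : u ++ wpow c n ∈ L := by
  have : [] ∈ L.leftQuotient (u ++ wpow c n) := by
    rw [leftQuotient_append_wpow h]; simpa using hu
  simpa using this

def Pumpable (L₁ L₂ : Language α) : Prop :=
  ∃ b d e g : List α, d ++ e ≠ [] ∧
    (∀ i : ℕ, b ++ wpow (d ++ e) i ++ d ∈ L₁) ∧ (∀ j : ℕ, e ++ wpow (d ++ e) j ++ g ∈ L₂)

theorem pumpable_of_leftQuotient_eq {L₁ L₂ : Language α} {u c v : List α} (hc : c ≠ [])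
    (hu : u ∈ L₁) (hv : v ∈ L₂) (h₁ : L₁.leftQuotient (u ++ c) = L₁.leftQuotient u)
    (h₂ : L₂.reverse.leftQuotient (v.reverse ++ c.reverse) = L₂.reverse.leftQuotient v.reverse) :
    Pumpable L₁ L₂ := by
  refine ⟨u, [], c, v, by simpa using hc, fun i => by simpa using append_wpow_mem hu h₁ i,
    fun j => ?_⟩
  have := append_wpow_mem (L := L₂.reverse) (by simpa [mem_reverse] using hv) h₂ (j + 1)
  rw [mem_reverse, List.reverse_append, reverse_wpow, List.reverse_reverse,
    List.reverse_reverse] at this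
  simpa [wpow] using this

end Language

namespace RegularExpression

theorem finite_range_leftQuotient_matches' :
    ∀ R : RegularExpression α, (Set.range R.matches'.leftQuotient).Finite
  | 0 => Language.finite_range_leftQuotient_of_finite Set.finite_empty
  | 1 => Language.finite_range_leftQuotient_of_finite (Set.finite_singleton _)
  | char _ => Language.finite_range_leftQuotient_of_finite (Set.finite_singleton _)
  | P + Q => Language.finite_range_leftQuotient_add
      (finite_range_leftQuotient_matches' P) (finite_range_leftQuotient_matches' Q)
  | P * Q => Language.finite_range_leftQuotient_mul
      (finite_range_leftQuotient_matches' P) (finite_range_leftQuotient_matches' Q)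
  | star P => Language.finite_range_leftQuotient_kstar (finite_range_leftQuotient_matches' P)

theorem isRegular_matches' (R : RegularExpression α) : R.matches'.IsRegular :=
  .of_finite_range_leftQuotient R.finite_range_leftQuotient_matches'

end RegularExpression

namespace ParseTree

open RegularExpression Language

theorem mem_matches' : ∀ {R : RegularExpression α} {w : List α}, ParseTree R w → w ∈ R.matches'
  | _, _, .eps => rfl
  | _, _, .char _ => rfl
  | _, _, .plusLeft t => Or.inl t.mem_matches'
  | _, _, .plusRight t => Or.inr t.mem_matches'
  | _, _, .comp t₁ t₂ => append_mem_mul t₁.mem_matches' t₂.mem_matches'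
  | _, _, .starNil => nil_mem_kstar _
  | _, _, .starCons (R := R) t₁ t₂ =>
    mul_kstar_le_kstar (a := R.matches') (append_mem_mul t₁.mem_matches' t₂.mem_matches')

theorem nonempty_of_mem_matches' :
    ∀ {R : RegularExpression α} {w : List α}, w ∈ R.matches' → Nonempty (ParseTree R w)
  | 0, _, h => absurd h (notMem_zero _)
  | 1, _, rfl => ⟨.eps⟩
  | .char a, _, rfl => ⟨.char a⟩
  | _ + _, _, .inl h => (nonempty_of_mem_matches' h).map .plusLeft
  | _ + _, _, .inr h => (nonempty_of_mem_matches' h).map .plusRight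
  | _ * _, _, ⟨_, h₁, _, h₂, rfl⟩ =>
      (nonempty_of_mem_matches' h₁).elim fun t₁ => (nonempty_of_mem_matches' h₂).map (.comp t₁)
  | .star _, _, h => by
    obtain ⟨S, rfl, hS⟩ := mem_kstar.1 h
    clear h
    induction S with
    | nil => exact ⟨.starNil⟩
    | cons x S ih =>
      obtain ⟨t⟩ := nonempty_of_mem_matches' (hS x List.mem_cons_self)
      obtain ⟨ts⟩ := ih fun y hy => hS y (List.mem_cons_of_mem _ hy)
      exact ⟨.starCons t ts⟩

variable {R₁ R₂ : RegularExpression α} {w : List α}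

def leftWord : ParseTree (R₁ * R₂) w → List α
  | .comp (u := u) _ _ => u

def rightWord : ParseTree (R₁ * R₂) w → List α
  | .comp (v := v) _ _ => v

theorem leftWord_append_rightWord (t : ParseTree (R₁ * R₂) w) : t.leftWord ++ t.rightWord = w := by
  cases t; rfl

theorem leftWord_mem (t : ParseTree (R₁ * R₂) w) : t.leftWord ∈ R₁.matches' := by
  cases t with | comp t₁ _ => exact t₁.mem_matches'

theorem rightWord_mem (t : ParseTree (R₁ * R₂) w) : t.rightWord ∈ R₂.matches' := by
  cases t with | comp _ t₂ => exact t₂.mem_matches'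

theorem eq_of_leftWord_eq (h₁ : Unambiguous R₁) (h₂ : Unambiguous R₂)
    {t t' : ParseTree (R₁ * R₂) w} (h : t.leftWord = t'.leftWord) : t = t' := by
  -- With the index generalized, `cases` can destructure both trees.
  suffices ∀ {w'} (hw : w = w') (s : ParseTree (R₁ * R₂) w'), t.leftWord = s.leftWord →
      hw ▸ t = s from this rfl t' h
  intro _ hw s h
  cases t with | comp t₁ t₂ => cases s with | comp s₁ s₂ =>
  obtain rfl : _ = _ := h
  obtain rfl := List.append_cancel_left hw
  rw [h₁ _ t₁ s₁, h₂ _ t₂ s₂]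
  rfl

theorem leftWord_cast {w' : List α} (hw : w = w') (t : ParseTree (R₁ * R₂) w) :
    (hw ▸ t).leftWord = t.leftWord := by
  subst hw; rfl

theorem eq_of_leftQuotient_eq (h₁ : Unambiguous R₁) (h₂ : Unambiguous R₂)
    (hno : ¬ Pumpable R₁.matches' R₂.matches') {t t' : ParseTree (R₁ * R₂) w}
    (hl : R₁.matches'.leftQuotient t.leftWord = R₁.matches'.leftQuotient t'.leftWord)
    (hr : R₂.matches'.reverse.leftQuotient t.rightWord.reverse =
      R₂.matches'.reverse.leftQuotient t'.rightWord.reverse) : t = t' := by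
  wlog hlen : t.leftWord.length ≤ t'.leftWord.length generalizing t t'
  · exact (this hl.symm hr.symm (le_of_not_ge hlen)).symm
  have hw := t.leftWord_append_rightWord.trans t'.leftWord_append_rightWord.symm
  rcases List.append_eq_append_iff.1 hw with ⟨c, hc, hv⟩ | ⟨c, hc, -⟩
  · rcases eq_or_ne c [] with rfl | hc0
    · exact eq_of_leftWord_eq h₁ h₂ (by simpa using hc.symm)
    · refine absurd (pumpable_of_leftQuotient_eq hc0 t.leftWord_mem t'.rightWord_mem ?_ ?_) hno
      · rw [← hc]; exact hl.symm
      · rw [← List.reverse_append, ← hv]; exact hr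
  · obtain rfl : c = [] := by
      rw [hc, List.length_append] at hlen
      exact List.eq_nil_of_length_eq_zero (by omega)
    exact eq_of_leftWord_eq h₁ h₂ (by simpa using hc)

end ParseTree

open Language ParseTree

theorem boundedBy_of_injective {R : RegularExpression α} {β : Type*} {S : Set β} (hS : S.Finite)
    (f : ∀ {w}, ParseTree R w → β) (hfS : ∀ {w} (t : ParseTree R w), f t ∈ S)
    (hf : ∀ {w}, Function.Injective (@f w)) : BoundedBy R S.ncard := by
  intro w l hl
  have := hS.fintype
  let g : ParseTree R w → S := fun t => ⟨f t, hfS t⟩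
  have hg : Function.Injective g := fun t t' h => hf (congrArg Subtype.val h)
  calc l.length = (l.map g).length := (List.length_map _).symm
    _ ≤ Fintype.card S := (hl.map hg).length_le_card
    _ = S.ncard := by rw [← Nat.card_eq_fintype_card, Nat.card_coe_set_eq]

theorem ambiguous_mul_of_overlaps {R₁ R₂ : RegularExpression α}
    (hov : Overlaps R₁.matches' R₂.matches') : Ambiguous (R₁ * R₂) := by
  obtain ⟨x, y, a, ha, hx, hxa, hay, hy⟩ := hov
  obtain ⟨t₁⟩ := nonempty_of_mem_matches' hx
  obtain ⟨t₂⟩ := nonempty_of_mem_matches' hay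
  obtain ⟨t₁'⟩ := nonempty_of_mem_matches' hxa
  obtain ⟨t₂'⟩ := nonempty_of_mem_matches' hy
  refine ⟨_, .comp t₁ t₂, List.append_assoc x a y ▸ .comp t₁' t₂', fun h => ha ?_⟩
  have : x = x ++ a := (congrArg leftWord h).trans (leftWord_cast _ _)
  simpa using this

theorem boundedBy_mul_of_not_pumpable {R₁ R₂ : RegularExpression α} (h₁ : Unambiguous R₁)
    (h₂ : Unambiguous R₂) (hno : ¬ Pumpable R₁.matches' R₂.matches') :
    ∃ k, BoundedBy (R₁ * R₂) k :=
  ⟨_, boundedBy_of_injective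
    (R₁.finite_range_leftQuotient_matches'.prod
      R₂.isRegular_matches'.reverse.finite_range_leftQuotient)
    (fun t => (R₁.matches'.leftQuotient t.leftWord,
      R₂.matches'.reverse.leftQuotient t.rightWord.reverse))
    (fun _ => ⟨⟨_, rfl⟩, ⟨_, rfl⟩⟩)
    (fun h => eq_of_leftQuotient_eq h₁ h₂ hno (congrArg Prod.fst h) (congrArg Prod.snd h))⟩

/-- Theorem 2(b): for unambiguous `R₁`, `R₂` with overlapping languages, if the
word-level pumping condition fails then `R₁·R₂` is finitely ambiguous. -/
theorem stmt_3 {α : Type u} (R₁ R₂ : RegularExpression α)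
    (h₁ : Unambiguous R₁) (h₂ : Unambiguous R₂)
    (hov : Overlaps R₁.matches' R₂.matches')
    (hno : ¬ ∃ b d e g : List α, d ++ e ≠ [] ∧
        (∀ i : ℕ, b ++ wpow (d ++ e) i ++ d ∈ R₁.matches') ∧
        (∀ j : ℕ, e ++ wpow (d ++ e) j ++ g ∈ R₂.matches')) :
    FinitelyAmbiguous (R₁ * R₂) :=
  ⟨ambiguous_mul_of_overlaps hov, boundedBy_mul_of_not_pumpable h₁ h₂ hno⟩
end

section
/- For any regex R over Σ, if the star R* is ambiguous then R* is infinitely ambiguous; equivalently, R* can never be finitely ambiguous. (Paper's Theorem 3(b) and Appendix Lemma 2.) -/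
/-! Shared definitions: words, word power, parse trees of regular expressions,
(un)ambiguity, finite/infinite ambiguity, and the Brabrand–Thomsen overlap. -/

universe u

variable {α : Type u}

/-! A parse tree of `R*` is the same thing as a list of parse trees of `R`. If `R*` has two
distinct parse trees `A ≠ B` of a word `w`, then for each `i ≤ k` the list `B^i A^(k-i)` is a
parse tree of `R*` for `w^k`. These `k + 1` lists are pairwise distinct: cancelling common
factors from `B^i A^(k-i) = B^j A^(k-j)` with `i < j` leaves `A^(j-i) = B^(j-i)`, and a
nonzero power of a list determines the list. -/

section WordPower

variable {β : Type*}

theorem wpow_add (w : List β) (m n : ℕ) : wpow w (m + n) = wpow w m ++ wpow w n := by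
  induction m with
  | zero => simp [wpow]
  | succ m ih => rw [Nat.succ_add]; simp [wpow, ih]

theorem length_wpow (w : List β) (n : ℕ) : (wpow w n).length = n * w.length := by
  induction n with
  | zero => simp [wpow]
  | succ n ih => simp [wpow, ih, Nat.succ_mul, Nat.add_comm]

theorem map_wpow {γ : Type*} (f : β → γ) (w : List β) (n : ℕ) :
    (wpow w n).map f = wpow (w.map f) n := by
  induction n with
  | zero => rfl
  | succ n ih => simp [wpow, ih]

theorem flatten_wpow (L : List (List β)) (n : ℕ) :
    (wpow L n).flatten = wpow L.flatten n := by
  induction n with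
  | zero => rfl
  | succ n ih => simp [wpow, ih]

theorem wpow_left_injective {n : ℕ} (hn : n ≠ 0) {A B : List β}
    (h : wpow A n = wpow B n) : A = B := by
  obtain ⟨n, rfl⟩ := Nat.exists_eq_succ_of_ne_zero hn
  have hlen : A.length = B.length := by
    have := congrArg List.length h
    rw [length_wpow, length_wpow] at this
    exact Nat.eq_of_mul_eq_mul_left n.succ_pos this
  exact (List.append_inj h hlen).1

theorem wpow_append_wpow_sub_injective {A B : List β} (hAB : A ≠ B) {i j k : ℕ}
    (hi : i ≤ k) (hj : j ≤ k) (h : wpow B i ++ wpow A (k - i) = wpow B j ++ wpow A (k - j)) :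
    i = j := by
  wlog hij : i ≤ j generalizing i j
  · exact (this hj hi h.symm (le_of_not_ge hij)).symm
  obtain ⟨d, rfl⟩ := Nat.exists_eq_add_of_le hij
  obtain ⟨m, rfl⟩ := Nat.exists_eq_add_of_le hj
  by_contra hne
  have hd : d ≠ 0 := by omega
  rw [show i + d + m - i = d + m by omega, show i + d + m - (i + d) = m by omega,
    wpow_add, wpow_add B i d, List.append_assoc] at h
  exact hAB (wpow_left_injective hd (List.append_cancel_right (List.append_cancel_left h)))

end WordPower

namespace ParseTree

variable {R : RegularExpression α}

abbrev Chunk (R : RegularExpression α) : Type u := Σ u : List α, ParseTree R u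

def yield (l : List (Chunk R)) : List α := (l.map Sigma.fst).flatten

theorem yield_append (l₁ l₂ : List (Chunk R)) : yield (l₁ ++ l₂) = yield l₁ ++ yield l₂ := by
  simp [yield]

theorem yield_wpow (l : List (Chunk R)) (n : ℕ) : yield (wpow l n) = wpow (yield l) n := by
  simp [yield, map_wpow, flatten_wpow]

def ofChunks : (l : List (Chunk R)) → ParseTree R.star (yield l)
  | [] => starNil
  | c :: l => starCons c.2 (ofChunks l)

def toChunks : {w : List α} → ParseTree R.star w → List (Chunk R)
  | _, starNil => []
  | _, starCons (u := u) t s => ⟨u, t⟩ :: toChunks s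

theorem yield_toChunks : ∀ {w : List α} (t : ParseTree R.star w), yield (toChunks t) = w
  | _, starNil => by simp [toChunks, yield]
  | _, starCons _ s => by simpa [toChunks, yield] using yield_toChunks s

theorem toChunks_ofChunks : ∀ l : List (Chunk R), toChunks (ofChunks l) = l
  | [] => toChunks.eq_1
  | c :: l => (toChunks.eq_2 _ _ c.2 (ofChunks l)).trans (congrArg (c :: ·) (toChunks_ofChunks l))

theorem heq_of_toChunks_eq : ∀ {w w' : List α} (t : ParseTree R.star w)
    (t' : ParseTree R.star w'), toChunks t = toChunks t' → w = w' ∧ HEq t t'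
  | _, _, starNil, starNil, _ => ⟨rfl, HEq.rfl⟩
  | _, _, starNil, starCons _ _, h => by simp [toChunks] at h
  | _, _, starCons _ _, starNil, h => by simp [toChunks] at h
  | _, _, starCons t s, starCons t' s', h => by
      rw [toChunks.eq_2, toChunks.eq_2, List.cons.injEq, Sigma.mk.inj_iff] at h
      obtain ⟨⟨rfl, htt'⟩, hss'⟩ := h
      obtain ⟨rfl, hss'⟩ := heq_of_toChunks_eq s s' hss'
      cases htt'
      cases hss'
      exact ⟨rfl, HEq.rfl⟩

theorem toChunks_injective {w : List α} :
    Function.Injective (toChunks : ParseTree R.star w → List (Chunk R)) :=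
  fun _ _ h => eq_of_heq (heq_of_toChunks_eq _ _ h).2

def ofChunksOfYieldEq (l : List (Chunk R)) {w : List α} (h : yield l = w) :
    ParseTree R.star w :=
  h ▸ ofChunks l

theorem toChunks_ofChunksOfYieldEq (l : List (Chunk R)) {w : List α} (h : yield l = w) :
    toChunks (ofChunksOfYieldEq l h) = l := by
  subst h
  exact toChunks_ofChunks l

end ParseTree

open ParseTree

theorem hasAtLeastTrees_star_wpow {R : RegularExpression α} {w : List α}
    {t₁ t₂ : ParseTree R.star w} (hne : t₁ ≠ t₂) (k : ℕ) :
    HasAtLeastTrees R.star (wpow w k) (k + 1) := by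
  set A := toChunks t₁
  set B := toChunks t₂
  have hAB : A ≠ B := fun h => hne (toChunks_injective h)
  have hyield (i : Fin (k + 1)) : yield (wpow B i ++ wpow A (k - i)) = wpow w k := by
    rw [yield_append, yield_wpow, yield_wpow, yield_toChunks, yield_toChunks, ← wpow_add]
    congr 1
    omega
  refine ⟨List.ofFn fun i => ofChunksOfYieldEq _ (hyield i), ?_, by simp⟩
  refine List.nodup_ofFn.mpr fun i j hij => Fin.ext ?_
  have := congrArg toChunks hij
  rw [toChunks_ofChunksOfYieldEq, toChunks_ofChunksOfYieldEq] at this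
  exact wpow_append_wpow_sub_injective hAB (Nat.lt_succ_iff.mp i.2) (Nat.lt_succ_iff.mp j.2) this

theorem Ambiguous.infinitelyAmbiguous_star {R : RegularExpression α}
    (h : Ambiguous R.star) : InfinitelyAmbiguous R.star := by
  obtain ⟨w, t₁, t₂, hne⟩ := h
  exact fun k => ⟨wpow w k, hasAtLeastTrees_star_wpow hne k⟩

theorem not_boundedBy_of_infinitelyAmbiguous {R : RegularExpression α}
    (h : InfinitelyAmbiguous R) (k : ℕ) : ¬ BoundedBy R k := by
  intro hk
  obtain ⟨w, l, hnd, hlen⟩ := h k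
  have := hk w l hnd
  omega

/-- Theorem 3(b) / Appendix Lemma 2: for any regex `R`, if `R*` is ambiguous
then it is infinitely ambiguous; equivalently, `R*` is never finitely
ambiguous. -/
theorem stmt_5 {α : Type u} (R : RegularExpression α) :
    (Ambiguous R.star → InfinitelyAmbiguous R.star) ∧
      ¬ FinitelyAmbiguous R.star :=
  ⟨Ambiguous.infinitelyAmbiguous_star, fun ⟨hamb, k, hk⟩ =>
    not_boundedBy_of_infinitelyAmbiguous hamb.infinitelyAmbiguous_star k hk⟩
end
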